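/- arXiv:2107.05947 — 9 statements merged into one kernel-verified Lean document; each statement's English description precedes it below -/
import Mathlib

section
/- Let R be one of the three base relations ≤*, ≠*, ∈* and let I be an ideal on ω^ω. If 𝔟(R) = non(I) = 𝔠, then 𝔡(R_I) ≤ 𝔡_𝔠 and 𝔟_𝔠 ≤ 𝔟(R_I). -/
open Cardinal

/-- Baire space: the set of functions ℕ → ℕ. -/
abbrev Baire : Type := ℕ → ℕ

/-- A slalom is a function `s : ℕ → Finset ℕ` with `|s n| ≤ n` for all `n`. -/
abbrev Slalom : Type := {s : ℕ → Finset ℕ // ∀ n, (s n).card ≤ n}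

/-- `x ≤* y` : `x n ≤ y n` for all but finitely many `n`. -/
def leStar (x y : Baire) : Prop := ∀ᶠ n in Filter.atTop, x n ≤ y n

/-- `x ≠* y` : `x n ≠ y n` for all but finitely many `n`. -/
def neStar (x y : Baire) : Prop := ∀ᶠ n in Filter.atTop, x n ≠ y n

/-- `x ∈* s` : `x n ∈ s n` for all but finitely many `n`. -/
def inStar (x : Baire) (s : Slalom) : Prop := ∀ᶠ n in Filter.atTop, x n ∈ s.1 n

/-- The bounding number `𝔟(R)` of a relation: least cardinality of an `R`-unbounded set. -/
noncomputable def bnum {X Y : Type} (R : X → Y → Prop) : Cardinal :=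
  sInf { c | ∃ A : Set X, #A = c ∧ ∀ y : Y, ∃ x ∈ A, ¬ R x y }

/-- The dominating number `𝔡(R)` of a relation: least cardinality of an `R`-dominating set. -/
noncomputable def dnum {X Y : Type} (R : X → Y → Prop) : Cardinal :=
  sInf { c | ∃ D : Set Y, #D = c ∧ ∀ x : X, ∃ y ∈ D, R x y }

/-- The relation `R_I` on functions `ω^ω → ω^ω` (resp. `ω^ω → S`):
`f R_I g` iff `{x : ¬ f x R g x} ∈ I`. -/
def RelMod {Y : Type} (R : Baire → Y → Prop) (I : Set (Set Baire))
    (f : Baire → Baire) (g : Baire → Y) : Prop :=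
  {x : Baire | ¬ R (f x) (g x)} ∈ I

/-- An ideal on `ω^ω`: nonempty, closed under subsets and finite unions. -/
def IsIdeal (I : Set (Set Baire)) : Prop :=
  I.Nonempty ∧ (∀ A B : Set Baire, A ∈ I → B ⊆ A → B ∈ I) ∧
    (∀ A B : Set Baire, A ∈ I → B ∈ I → A ∪ B ∈ I)

/-- A σ-ideal: an ideal moreover closed under countable unions. -/
def IsSigmaIdeal (I : Set (Set Baire)) : Prop :=
  IsIdeal I ∧ ∀ f : ℕ → Set Baire, (∀ n, f n ∈ I) → (⋃ n, f n) ∈ I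

/-- `cov(I)`: least cardinality of a subfamily of `I` covering `ω^ω`. -/
noncomputable def covNum (I : Set (Set Baire)) : Cardinal :=
  sInf { c | ∃ J : Set (Set Baire), J ⊆ I ∧ #J = c ∧ ⋃₀ J = Set.univ }

/-- `non(I)`: least cardinality of a subset of `ω^ω` not in `I`. -/
noncomputable def nonNum (I : Set (Set Baire)) : Cardinal :=
  sInf { c | ∃ A : Set Baire, #A = c ∧ A ∉ I }

/-- `add(I)`: least cardinality of a subfamily of `I` whose union is not in `I`. -/
noncomputable def addNum (I : Set (Set Baire)) : Cardinal :=
  sInf { c | ∃ J : Set (Set Baire), J ⊆ I ∧ #J = c ∧ ⋃₀ J ∉ I }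

/-- Eventual domination on `κ^κ`: `f ≤* g` iff `{α : f α > g α}` is a bounded subset of `κ`. -/
def kappaLeStar (κ : Cardinal) (f g : κ.ord.ToType → κ.ord.ToType) : Prop :=
  BddAbove {a | ¬ f a ≤ g a}

/-- `𝔟_κ`, the bounding number of eventual domination on `κ^κ`. -/
noncomputable def bKappa (κ : Cardinal) : Cardinal := bnum (kappaLeStar κ)

/-- `𝔡_κ`, the dominating number of eventual domination on `κ^κ`. -/
noncomputable def dKappa (κ : Cardinal) : Cardinal := dnum (kappaLeStar κ)

/- ------------------- auxiliary lemmas ------------------- -/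

private lemma mk_Iic_lt_continuum (a : continuum.ord.ToType) : #(Set.Iic a) < continuum := by
  have inst : IsWellOrder continuum.ord.ToType ((· < ·) : _ → _ → Prop) := isWellOrder_lt
  have h1 : #(Set.Iio a) < continuum := by
    have ht := Ordinal.typein_lt_self a
    rw [Cardinal.lt_ord] at ht
    exact (@Ordinal.card_typein _ _ inst a) ▸ ht
  have h2 : (Set.Iic a : Set _) = Set.Iio a ∪ {a} := by
    ext x; simp [le_iff_lt_or_eq]
  calc #(Set.Iic a) ≤ #(Set.Iio a) + #({a} : Set _) := by
        rw [h2]; exact Cardinal.mk_union_le _ _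
    _ < continuum := by
        apply Cardinal.add_lt_of_lt aleph0_le_continuum h1
        simpa using one_lt_aleph0.trans_le aleph0_le_continuum

private lemma main_lemma {Y : Type} (R : Baire → Y → Prop)
    (hR : ∀ y : Y, ∃ x : Baire, ¬ R x y)
    (I : Set (Set Baire)) (hI : IsIdeal I)
    (hb : bnum R = continuum) (hn : nonNum I = continuum) :
    dnum (RelMod R I) ≤ dKappa continuum ∧ bKappa continuum ≤ bnum (RelMod R I) := by
  classical
  have hmkB : #Baire = continuum := by
    have h : #Baire = (ℵ₀ : Cardinal) ^ (ℵ₀ : Cardinal) := by simp [Cardinal.mk_arrow]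
    rw [h, aleph0_power_aleph0]
  have hmkT : #(continuum.ord.ToType) = continuum := by
    rw [Cardinal.mk_toType, Cardinal.card_ord]
  obtain ⟨e⟩ : Nonempty (continuum.ord.ToType ≃ Baire) :=
    Cardinal.eq.mp (hmkT.trans hmkB.symm)
  -- small sets are in I
  have small_mem : ∀ A : Set Baire, #A < continuum → A ∈ I := by
    intro A hA
    by_contra h
    have h2 : nonNum I ≤ #A := csInf_le' ⟨A, rfl, h⟩
    rw [hn] at h2
    exact absurd (h2.trans_lt hA) (lt_irrefl _)
  -- univ not in I
  have huniv_not : Set.univ ∉ I := by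
    have hne : {c | ∃ A : Set Baire, #A = c ∧ A ∉ I}.Nonempty := by
      by_contra hcon
      rw [Set.not_nonempty_iff_eq_empty] at hcon
      have h0 : nonNum I = 0 := by
        rw [nonNum, hcon]; simp
      rw [hn] at h0
      exact continuum_ne_zero h0
    obtain ⟨c, A, hA, hAI⟩ := hne
    intro hu
    exact hAI (hI.2.1 _ _ hu (Set.subset_univ A))
  -- small sets are R-bounded
  have small_bdd : ∀ A : Set Baire, #A < continuum → ∃ yb : Y, ∀ x ∈ A, R x yb := by
    intro A hA
    by_contra h
    push_neg at h
    have h2 : bnum R ≤ #A := csInf_le' ⟨A, rfl, by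
      intro yb; obtain ⟨x, hx1, hx2⟩ := h yb; exact ⟨x, hx1, hx2⟩⟩
    rw [hb] at h2
    exact absurd (h2.trans_lt hA) (lt_irrefl _)
  -- choose cofinal bounds
  have hy : ∀ b : continuum.ord.ToType, ∃ yb : Y, ∀ g : continuum.ord.ToType,
      g ≤ b → R (e g) yb := by
    intro b
    obtain ⟨yb, hyb⟩ := small_bdd (e '' Set.Iic b)
      (lt_of_le_of_lt Cardinal.mk_image_le (mk_Iic_lt_continuum b))
    exact ⟨yb, fun g hg => hyb _ ⟨g, hg, rfl⟩⟩
  choose y hy' using hy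
  -- the two Tukey maps
  let φ : (Baire → Baire) → (continuum.ord.ToType → continuum.ord.ToType) :=
    fun f a => e.symm (f (e a))
  let G : (continuum.ord.ToType → continuum.ord.ToType) → (Baire → Y) :=
    fun h x => y (h (e.symm x))
  -- key lemma
  have key : ∀ (f : Baire → Baire) (h : continuum.ord.ToType → continuum.ord.ToType),
      kappaLeStar continuum (φ f) h → RelMod R I f (G h) := by
    intro f h hk
    obtain ⟨a, ha⟩ := hk
    have hsub : {x : Baire | ¬ R (f x) (G h x)} ⊆ e '' Set.Iic a := by
      intro x hx
      refine ⟨e.symm x, ?_, e.apply_symm_apply x⟩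
      rw [Set.mem_Iic]
      by_contra hcon
      have hle : φ f (e.symm x) ≤ h (e.symm x) := by
        by_contra h2
        exact hcon (ha h2)
      have hle2 : e.symm (f x) ≤ h (e.symm x) := by
        simpa [φ] using hle
      have hr := hy' (h (e.symm x)) (e.symm (f x)) hle2
      rw [e.apply_symm_apply] at hr
      exact hx hr
    exact hI.2.1 _ _
      (small_mem _ (lt_of_le_of_lt Cardinal.mk_image_le (mk_Iic_lt_continuum a)))
      hsub
  constructor
  · -- dominating part
    have hTne : Nonempty continuum.ord.ToType := by
      rw [Ordinal.toType_nonempty_iff_ne_zero]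
      intro h0
      apply continuum_ne_zero
      rw [← Cardinal.card_ord continuum, h0, Ordinal.card_zero]
    have hrefl : ∀ h : continuum.ord.ToType → continuum.ord.ToType,
        kappaLeStar continuum h h := by
      intro h
      have he : {a : continuum.ord.ToType | ¬ h a ≤ h a} = ∅ := by ext a; simp
      rw [kappaLeStar, he]
      exact bddAbove_empty
    have hdne : {c | ∃ D : Set (continuum.ord.ToType → continuum.ord.ToType),
        Cardinal.mk D = c ∧ ∀ f, ∃ h ∈ D, kappaLeStar continuum f h}.Nonempty :=
      ⟨_, Set.univ, rfl, fun f => ⟨f, Set.mem_univ f, hrefl f⟩⟩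
    obtain ⟨D, hD1, hD2⟩ := csInf_mem hdne
    have hdom : ∀ f : Baire → Baire, ∃ g ∈ G '' D, RelMod R I f g := by
      intro f
      obtain ⟨h, hhD, hk⟩ := hD2 (φ f)
      exact ⟨G h, ⟨h, hhD, rfl⟩, key f h hk⟩
    calc dnum (RelMod R I) ≤ #(G '' D) := csInf_le' ⟨G '' D, rfl, hdom⟩
      _ ≤ #D := Cardinal.mk_image_le
      _ = dKappa continuum := hD1
  · -- bounding part
    have hbne : {c | ∃ A : Set (Baire → Baire), #A = c ∧
        ∀ g : Baire → Y, ∃ f ∈ A, ¬ RelMod R I f g}.Nonempty := by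
      refine ⟨_, Set.univ, rfl, ?_⟩
      intro g
      refine ⟨fun x => Classical.choose (hR (g x)), Set.mem_univ _, ?_⟩
      intro hmem
      have hequ : {x : Baire | ¬ R (Classical.choose (hR (g x))) (g x)} = Set.univ := by
        ext x; simpa using Classical.choose_spec (hR (g x))
      exact huniv_not (hequ ▸ hmem)
    obtain ⟨F, hF1, hF2⟩ := csInf_mem hbne
    have hunb : ∀ h : continuum.ord.ToType → continuum.ord.ToType,
        ∃ f' ∈ φ '' F, ¬ kappaLeStar continuum f' h := by
      intro h
      obtain ⟨f, hfF, hf⟩ := hF2 (G h)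
      exact ⟨φ f, ⟨f, hfF, rfl⟩, fun hk => hf (key f h hk)⟩
    calc bKappa continuum ≤ #(φ '' F) := csInf_le' ⟨φ '' F, rfl, hunb⟩
      _ ≤ #F := Cardinal.mk_image_le
      _ = bnum (RelMod R I) := hF1

private lemma hR_le : ∀ y : Baire, ∃ x : Baire, ¬ leStar x y := by
  intro y
  refine ⟨fun n => y n + 1, fun h => ?_⟩
  obtain ⟨n, hn⟩ := h.exists
  dsimp only at hn
  omega

private lemma hR_ne : ∀ y : Baire, ∃ x : Baire, ¬ neStar x y := by
  intro y
  refine ⟨y, fun h => ?_⟩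
  obtain ⟨n, hn⟩ := h.exists
  exact hn rfl

private lemma hR_in : ∀ s : Slalom, ∃ x : Baire, ¬ inStar x s := by
  intro s
  refine ⟨fun n => (s.1 n).sup Nat.succ, fun h => ?_⟩
  obtain ⟨n, hn⟩ := h.exists
  dsimp only at hn
  have := Finset.le_sup (f := Nat.succ) hn
  omega

/-- if `𝔟(R) = non(I) = 𝔠` then `𝔡(R_I) ≤ 𝔡_𝔠` and `𝔟_𝔠 ≤ 𝔟(R_I)`. -/
theorem stmt1 (I : Set (Set Baire)) (hI : IsIdeal I) :
    (bnum leStar = continuum → nonNum I = continuum →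
      dnum (RelMod leStar I) ≤ dKappa continuum ∧ bKappa continuum ≤ bnum (RelMod leStar I)) ∧
    (bnum neStar = continuum → nonNum I = continuum →
      dnum (RelMod neStar I) ≤ dKappa continuum ∧ bKappa continuum ≤ bnum (RelMod neStar I)) ∧
    (bnum inStar = continuum → nonNum I = continuum →
      dnum (RelMod inStar I) ≤ dKappa continuum ∧ bKappa continuum ≤ bnum (RelMod inStar I)) := by
  exact ⟨fun hb hn => main_lemma leStar hR_le I hI hb hn,
    fun hb hn => main_lemma neStar hR_ne I hI hb hn,
    fun hb hn => main_lemma inStar hR_in I hI hb hn⟩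
end

section
/- Let R be one of the three base relations ≤*, ≠*, ∈* and let I be a proper ideal on ω^ω with add(I) = 𝔠 and with a cofinal subfamily of cardinality at most 𝔠 (as N, M and K have). Then 𝔡_𝔠(≠*) ≤ 𝔡(R_I) and 𝔟(R_I) ≤ 𝔟_𝔠(≠*). -/
open Cardinal

/-- `I` has a cofinal subfamily of cardinality at most `𝔠`. -/
def HasCofinalBase (I : Set (Set Baire)) : Prop :=
  ∃ J : Set (Set Baire), J ⊆ I ∧ #J ≤ continuum ∧ ∀ X ∈ I, ∃ Y ∈ J, X ⊆ Y

/-- `f ≠* g` on `κ^κ`: `|{α : f α = g α}| < κ`. -/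
def kappaNeStar (κ : Cardinal) (f g : κ.ord.ToType → κ.ord.ToType) : Prop :=
  #{a | f a = g a} < κ

/-- `𝔟_κ(≠*)`. -/
noncomputable def bKappaNe (κ : Cardinal) : Cardinal := bnum (kappaNeStar κ)

/-- `𝔡_κ(≠*)`. -/
noncomputable def dKappaNe (κ : Cardinal) : Cardinal := dnum (kappaNeStar κ)

lemma mk_baire : #Baire = continuum := by
  show #(ℕ → ℕ) = continuum
  rw [← Cardinal.power_def, Cardinal.mk_nat, Cardinal.aleph0_power_aleph0]

lemma exists_transversal {X : Type} {W : Type} [LinearOrder W] [WellFoundedLT W]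
    (V : W → Set X)
    (h : ∀ (α : W) (S : Set X), #S ≤ #(Set.Iio α) → ∃ p, p ∉ V α ∧ p ∉ S) :
    ∃ z : W → X, Function.Injective z ∧ ∀ α, z α ∉ V α := by
  classical
  let F : ∀ α : W, (∀ γ : W, γ < α → X) → X := fun α prev =>
    Classical.choose (h α (Set.range fun γ : Set.Iio α => prev γ.1 γ.2) Cardinal.mk_range_le)
  let z : W → X := WellFounded.fix wellFounded_lt F
  have hz : ∀ α : W,
      z α = Classical.choose (h α (Set.range fun γ : Set.Iio α => z γ.1) Cardinal.mk_range_le) :=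
    fun α => WellFounded.fix_eq wellFounded_lt F α
  have spec : ∀ α : W, z α ∉ V α ∧ ∀ γ, γ < α → z α ≠ z γ := by
    intro α
    have h1 := Classical.choose_spec
      (h α (Set.range fun γ : Set.Iio α => z γ.1) Cardinal.mk_range_le)
    rw [← hz α] at h1
    exact ⟨h1.1, fun γ hγ hEq => h1.2 ⟨⟨γ, hγ⟩, hEq.symm⟩⟩
  refine ⟨z, ?_, fun α => (spec α).1⟩
  intro a c hac
  rcases lt_trichotomy a c with hlt | rfl | hlt
  · exact absurd hac.symm ((spec c).2 a hlt)
  · rfl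
  · exact absurd hac ((spec a).2 c hlt)

lemma main_ineq {Y : Type} (R : Baire → Y → Prop)
    (I : Set (Set Baire)) (hI : IsIdeal I) (hproper : (Set.univ : Set Baire) ∉ I)
    (hadd : addNum I = continuum) (hcof : HasCofinalBase I)
    (hwit : ∀ y : Y, ∃ x : Baire, ¬ R x y)
    (hdom : ∀ x : Baire, ∃ y : Y, R x y) :
    dKappaNe continuum ≤ dnum (RelMod R I) ∧ bnum (RelMod R I) ≤ bKappaNe continuum := by
  classical
  obtain ⟨Inem, Idown, Iunion⟩ := hI
  have hempty : (∅ : Set Baire) ∈ I := by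
    obtain ⟨A, hA⟩ := Inem; exact Idown A ∅ hA (Set.empty_subset A)
  -- unions of fewer than continuum many members of I are in I
  have hsmall : ∀ J' : Set (Set Baire), J' ⊆ I → #J' < continuum → ⋃₀ J' ∈ I := by
    intro J' hsub hc
    by_contra hN
    have h1 : addNum I ≤ #J' := csInf_le (OrderBot.bddBelow _) ⟨J', hsub, rfl, hN⟩
    rw [hadd] at h1
    exact absurd (h1.trans_lt hc) (lt_irrefl _)
  have hsmallI : ∀ {ι : Type} (A : ι → Set Baire), #ι < continuum →
      (∀ i, A i ∈ I) → (⋃ i, A i) ∈ I := by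
    intro ι A hι hA
    have h1 := hsmall (Set.range A) (by rintro _ ⟨i, rfl⟩; exact hA i)
      (Cardinal.mk_range_le.trans_lt hι)
    rwa [Set.sUnion_range] at h1
  -- avoidance lemma
  have havoid : ∀ B ∈ I, ∀ S : Set Baire, #S < continuum → ∃ p : Baire, p ∉ B ∧ p ∉ S := by
    intro B hB S hS
    by_contra hc
    push_neg at hc
    set S₁ : Set Baire := {p ∈ S | ∃ A ∈ I, p ∈ A} with hS₁def
    set J' : Set (Set Baire) := insert B ((fun p => ({p} : Set Baire)) '' S₁) with hJ'def
    have hJ'sub : J' ⊆ I := by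
      rintro T hT
      rcases hT with rfl | ⟨p, hp, rfl⟩
      · exact hB
      · obtain ⟨A, hA, hpA⟩ := hp.2
        exact Idown A {p} hA (by simpa using hpA)
    have hJ'card : #J' < continuum := by
      calc #J' ≤ #((fun p => ({p} : Set Baire)) '' S₁) + 1 := Cardinal.mk_insert_le
        _ ≤ #S₁ + 1 := by
            gcongr
            exact Cardinal.mk_image_le
        _ ≤ #S + 1 := by
            gcongr
            exact Cardinal.mk_le_mk_of_subset (Set.sep_subset _ _)
        _ < continuum := Cardinal.add_lt_of_lt Cardinal.aleph0_le_continuum hS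
            (Cardinal.one_lt_aleph0.trans Cardinal.aleph0_lt_continuum)
    have hC : ⋃₀ J' ∈ I := hsmall J' hJ'sub hJ'card
    have hCmax : ∀ A ∈ I, A ⊆ ⋃₀ J' := by
      intro A hA x hx
      by_cases hxB : x ∈ B
      · exact ⟨B, Set.mem_insert _ _, hxB⟩
      · exact ⟨{x}, Set.mem_insert_of_mem _ ⟨x, ⟨hc x hxB, A, hA, hx⟩, rfl⟩, rfl⟩
    have hempt : {c | ∃ J'' : Set (Set Baire), J'' ⊆ I ∧ #J'' = c ∧ ⋃₀ J'' ∉ I} = ∅ := by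
      ext c
      simp only [Set.mem_setOf_eq, Set.mem_empty_iff_false, iff_false]
      rintro ⟨J'', hsub, -, hun⟩
      refine hun (Idown _ _ hC ?_)
      rintro x ⟨T, hT, hxT⟩
      exact hCmax T (hsub hT) hxT
    have h0 : addNum I = 0 := by
      rw [addNum, hempt]
      simp
    rw [hadd] at h0
    exact Cardinal.continuum_ne_zero h0
  -- enumerations
  have hK : #(continuum.ord).ToType = continuum := Cardinal.mk_ord_toType continuum
  obtain ⟨e⟩ : Nonempty ((continuum.ord).ToType ≃ Baire) := by
    rw [← Cardinal.eq, hK, mk_baire]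
  obtain ⟨J, hJI, hJcard, hJcof⟩ := hcof
  have hJne : Nonempty ↥J := by
    obtain ⟨T, hT, -⟩ := hJcof ∅ hempty; exact ⟨⟨T, hT⟩⟩
  obtain ⟨i⟩ : Nonempty (↥J ↪ (continuum.ord).ToType) := by
    rw [← Cardinal.le_def, hK]; exact hJcard
  let b : (continuum.ord).ToType → ↥J := Function.invFun i
  have hbsurj : Function.Surjective b := Function.invFun_surjective i.injective
  -- the sets V
  have hIic : ∀ α : (continuum.ord).ToType, #(Set.Iic α) < continuum := by
    intro α
    have h2 : (Set.Iic α) ⊆ insert α (Set.Iio α) := by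
      intro γ hγ
      rcases lt_or_eq_of_le (Set.mem_Iic.mp hγ) with h | h
      · exact Set.mem_insert_of_mem _ h
      · exact h ▸ Set.mem_insert _ _
    calc #(Set.Iic α) ≤ #(insert α (Set.Iio α) : Set _) := Cardinal.mk_le_mk_of_subset h2
      _ ≤ #(Set.Iio α) + 1 := Cardinal.mk_insert_le
      _ < continuum := Cardinal.add_lt_of_lt Cardinal.aleph0_le_continuum
          (Cardinal.mk_Iio_ord_toType α)
          (Cardinal.one_lt_aleph0.trans Cardinal.aleph0_lt_continuum)
  let V : (continuum.ord).ToType → Set Baire :=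
    fun α => ⋃ γ : (Set.Iic α), ((b γ.1 : Set Baire))
  have hVI : ∀ α, V α ∈ I := fun α => hsmallI _ (hIic α) (fun γ => hJI (b γ.1).2)
  have hVmem : ∀ (γ α : (continuum.ord).ToType), γ ≤ α → ((b γ : Set Baire)) ⊆ V α :=
    fun γ α h => Set.subset_iUnion (fun δ : (Set.Iic α) => ((b δ.1 : Set Baire))) ⟨γ, h⟩
  -- transversal
  obtain ⟨z, hzinj, hzV⟩ := exists_transversal V (by
    intro α S hS
    exact havoid (V α) (hVI α) S (hS.trans_lt (Cardinal.mk_Iio_ord_toType α)))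
  -- witnesses
  choose w hw using hwit
  -- the morphism
  let phm : ((continuum.ord).ToType → (continuum.ord).ToType) → Baire → Baire := fun f x =>
    if hx : x ∈ Set.range z then e (f (Classical.choose hx)) else x
  let php : (Baire → Y) → (continuum.ord).ToType → (continuum.ord).ToType := fun g α =>
    e.symm (w (g (z α)))
  have hphm : ∀ f α, phm f (z α) = e (f α) := by
    intro f α
    have hx : z α ∈ Set.range z := ⟨α, rfl⟩
    have hch : Classical.choose hx = α := hzinj (Classical.choose_spec hx)
    simp only [phm, dif_pos hx, hch]
  have hmor : ∀ f g, RelMod R I (phm f) g → kappaNeStar continuum f (php g) := by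
    intro f g hRel
    unfold kappaNeStar
    by_contra hlt
    push_neg at hlt
    obtain ⟨T, hTJ, hNT⟩ := hJcof _ hRel
    obtain ⟨γ₀, hγ₀⟩ := hbsurj ⟨T, hTJ⟩
    have hex : ∃ α, (f α = php g α) ∧ γ₀ ≤ α := by
      by_contra hno
      push_neg at hno
      have hsub : {a | f a = php g a} ⊆ Set.Iio γ₀ := by
        intro a ha
        exact Set.mem_Iio.mpr (hno a ha)
      have h2 := (Cardinal.mk_le_mk_of_subset hsub).trans_lt (Cardinal.mk_Iio_ord_toType γ₀)
      exact absurd (hlt.trans_lt h2) (lt_irrefl _)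
    obtain ⟨α, hfα, hγα⟩ := hex
    have hzN : z α ∈ {x | ¬ R (phm f x) (g x)} := by
      have : phm f (z α) = w (g (z α)) := by
        rw [hphm f α, hfα]
        show e (e.symm (w (g (z α)))) = _
        exact e.apply_symm_apply _
      simp only [Set.mem_setOf_eq, this]
      exact hw (g (z α))
    have hmem : z α ∈ V α := by
      refine hVmem γ₀ α hγα ?_
      rw [hγ₀]
      exact hNT hzN
    exact hzV α hmem
  constructor
  · -- dKappaNe ≤ dnum
    have hne : {c | ∃ D : Set (Baire → Y), #D = c ∧ ∀ f, ∃ g ∈ D, RelMod R I f g}.Nonempty := by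
      refine ⟨#(Set.univ : Set (Baire → Y)), Set.univ, rfl, fun f => ?_⟩
      refine ⟨fun x => Classical.choose (hdom (f x)), Set.mem_univ _, ?_⟩
      have h1 : {x | ¬ R (f x) (Classical.choose (hdom (f x)))} = ∅ := by
        ext x; simp [Classical.choose_spec (hdom (f x))]
      show {x | ¬ R (f x) _} ∈ I
      rw [h1]
      exact hempty
    obtain ⟨D, hDcard, hDdom⟩ := csInf_mem hne
    have hmem : #(php '' D) ∈ {c | ∃ D' : Set ((continuum.ord).ToType → (continuum.ord).ToType),
        Cardinal.mk D' = c ∧ ∀ f, ∃ h ∈ D', kappaNeStar continuum f h} := by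
      refine ⟨php '' D, rfl, fun f => ?_⟩
      obtain ⟨g, hg, hRg⟩ := hDdom (phm f)
      exact ⟨php g, Set.mem_image_of_mem _ hg, hmor f g hRg⟩
    calc dKappaNe continuum ≤ #(php '' D) := csInf_le (OrderBot.bddBelow _) hmem
      _ ≤ #D := Cardinal.mk_image_le
      _ = dnum (RelMod R I) := hDcard
  · -- bnum ≤ bKappaNe
    have hbne : {c | ∃ A : Set ((continuum.ord).ToType → (continuum.ord).ToType),
        Cardinal.mk A = c ∧ ∀ h, ∃ f ∈ A, ¬ kappaNeStar continuum f h}.Nonempty := by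
      refine ⟨_, Set.univ, rfl, fun h => ⟨h, Set.mem_univ _, ?_⟩⟩
      unfold kappaNeStar
      have h1 : {a | h a = h a} = Set.univ := by ext a; simp
      rw [h1, Cardinal.mk_univ, hK]
      exact lt_irrefl _
    obtain ⟨A, hAcard, hAunb⟩ := csInf_mem hbne
    have hmem : #(phm '' A) ∈ {c | ∃ A' : Set (Baire → Baire),
        Cardinal.mk A' = c ∧ ∀ g, ∃ f' ∈ A', ¬ RelMod R I f' g} := by
      refine ⟨phm '' A, rfl, fun g => ?_⟩
      obtain ⟨f, hf, hfnb⟩ := hAunb (php g)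
      exact ⟨phm f, Set.mem_image_of_mem _ hf, fun hR => hfnb (hmor f g hR)⟩
    calc bnum (RelMod R I) ≤ #(phm '' A) := csInf_le (OrderBot.bddBelow _) hmem
      _ ≤ #A := Cardinal.mk_image_le
      _ = bKappaNe continuum := hAcard

/-- if `I` is a proper ideal with `add(I) = 𝔠` and a cofinal subfamily of size
`≤ 𝔠`, then `𝔡_𝔠(≠*) ≤ 𝔡(R_I)` and `𝔟(R_I) ≤ 𝔟_𝔠(≠*)`. -/
theorem stmt2 (I : Set (Set Baire)) (hI : IsIdeal I) (hproper : (Set.univ : Set Baire) ∉ I)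
    (hadd : addNum I = continuum) (hcof : HasCofinalBase I) :
    (dKappaNe continuum ≤ dnum (RelMod leStar I) ∧ bnum (RelMod leStar I) ≤ bKappaNe continuum) ∧
    (dKappaNe continuum ≤ dnum (RelMod neStar I) ∧ bnum (RelMod neStar I) ≤ bKappaNe continuum) ∧
    (dKappaNe continuum ≤ dnum (RelMod inStar I) ∧ bnum (RelMod inStar I) ≤ bKappaNe continuum) := by
  refine ⟨main_ineq leStar I hI hproper hadd hcof ?_ ?_,
    main_ineq neStar I hI hproper hadd hcof ?_ ?_,
    main_ineq inStar I hI hproper hadd hcof ?_ ?_⟩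
  · intro y
    refine ⟨fun n => y n + 1, fun h => ?_⟩
    obtain ⟨n, hn⟩ := h.exists
    exact Nat.not_succ_le_self (y n) hn
  · intro x
    exact ⟨x, Filter.Eventually.of_forall fun n => le_refl _⟩
  · intro y
    refine ⟨y, fun h => ?_⟩
    obtain ⟨n, hn⟩ := h.exists
    exact hn rfl
  · intro x
    exact ⟨fun n => x n + 1, Filter.Eventually.of_forall fun n => Nat.ne_of_lt (Nat.lt_succ_self _)⟩
  · intro s
    choose v hv using fun n => Infinite.exists_notMem_finset (s.1 n)
    refine ⟨v, fun h => ?_⟩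
    obtain ⟨n, hn⟩ := h.exists
    exact hv n hn
  · intro x
    refine ⟨⟨fun n => if n = 0 then ∅ else {x n}, fun n => by cases n <;> simp⟩, ?_⟩
    refine Filter.eventually_atTop.mpr ⟨1, fun n hn => ?_⟩
    show x n ∈ (if n = 0 then ∅ else {x n})
    rw [if_neg (by omega)]
    exact Finset.mem_singleton_self _
end

section
/- Let R be one of the three base relations ≤*, ≠*, ∈* and let I be an ideal on ω^ω. If 𝔟(R) < cov(I), then 𝔟(R_I) = 𝔟(R). -/
open Cardinal

/-- Key general lemma. -/
theorem key {Y : Type} [Nonempty Y] (R : Baire → Y → Prop)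
    (hR : ∀ y : Y, ∃ x : Baire, ¬ R x y)
    (I : Set (Set Baire)) (hI : IsIdeal I)
    (h : bnum R < covNum I) : bnum (RelMod R I) = bnum R := by
  obtain ⟨⟨E, hE⟩, hdown, -⟩ := hI
  have hempty : (∅ : Set Baire) ∈ I := hdown E ∅ hE (Set.empty_subset E)
  -- the set of cardinalities of R-unbounded sets is nonempty
  have hSne : { c | ∃ A : Set Baire, #A = c ∧ ∀ y : Y, ∃ x ∈ A, ¬ R x y }.Nonempty := by
    refine ⟨#(Set.univ : Set Baire), Set.univ, rfl, fun y => ?_⟩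
    obtain ⟨x, hx⟩ := hR y
    exact ⟨x, Set.mem_univ x, hx⟩
  obtain ⟨A, hAcard, hAunb⟩ := csInf_mem hSne
  -- `F` : constant functions with values in `A`
  set F : Set (Baire → Baire) := (fun x => Function.const Baire x) '' A with hF
  have hFunb : ∀ g : Baire → Y, ∃ f ∈ F, ¬ RelMod R I f g := by
    intro g
    by_contra hcon
    push_neg at hcon
    set J : Set (Set Baire) := (fun x => {z : Baire | ¬ R x (g z)}) '' A with hJ
    have hJI : J ⊆ I := by
      rintro _ ⟨x, hx, rfl⟩
      exact hcon (Function.const Baire x) ⟨x, hx, rfl⟩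
    have hne : ⋃₀ J ≠ Set.univ := by
      intro hc
      have h1 : covNum I ≤ #J := csInf_le' ⟨J, hJI, rfl, hc⟩
      have h2 : #J ≤ #A := Cardinal.mk_image_le
      rw [hAcard] at h2
      exact absurd (h1.trans h2) (not_le.mpr h)
    obtain ⟨z, hz⟩ := Set.ne_univ_iff_exists_notMem _ |>.mp hne
    obtain ⟨x, hxA, hnx⟩ := hAunb (g z)
    exact hz ⟨{z' : Baire | ¬ R x (g z')}, ⟨x, hxA, rfl⟩, hnx⟩
  have hFcard : #F = bnum R := by
    rw [hF, Cardinal.mk_image_eq (Function.const_injective), hAcard]; rfl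
  -- the set of cardinalities of R_I-unbounded sets
  have hSIne : { c | ∃ A' : Set (Baire → Baire), #A' = c ∧
      ∀ g : Baire → Y, ∃ f ∈ A', ¬ RelMod R I f g }.Nonempty := ⟨#F, F, rfl, hFunb⟩
  have hle : bnum (RelMod R I) ≤ bnum R := by
    have := csInf_le' (a := #F)
      (s := { c | ∃ A' : Set (Baire → Baire), #A' = c ∧
        ∀ g : Baire → Y, ∃ f ∈ A', ¬ RelMod R I f g }) ⟨F, rfl, hFunb⟩
    rw [hFcard] at this
    exact this
  refine le_antisymm hle (le_csInf hSIne ?_)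
  rintro c ⟨G, hGcard, hGunb⟩
  by_contra hlt
  push_neg at hlt
  -- every vertical section of `G` is R-bounded
  have hb : ∀ z : Baire, ∃ y : Y, ∀ f ∈ G, R (f z) y := by
    intro z
    by_contra hno
    push_neg at hno
    have h1 : bnum R ≤ #((fun f : Baire → Baire => f z) '' G) := by
      refine csInf_le' ⟨(fun f : Baire → Baire => f z) '' G, rfl, fun y => ?_⟩
      obtain ⟨f, hfG, hf⟩ := hno y
      exact ⟨f z, ⟨f, hfG, rfl⟩, hf⟩
    have h2 : #((fun f : Baire → Baire => f z) '' G) ≤ #G := Cardinal.mk_image_le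
    rw [hGcard] at h2
    exact absurd (h1.trans h2) (not_le.mpr hlt)
  choose g hg using hb
  obtain ⟨f, hfG, hfn⟩ := hGunb g
  apply hfn
  have : {z : Baire | ¬ R (f z) (g z)} = ∅ := by
    ext z; simp only [Set.mem_setOf_eq, Set.mem_empty_iff_false, iff_false, not_not]
    exact hg z f hfG
  show {z : Baire | ¬ R (f z) (g z)} ∈ I
  rw [this]; exact hempty

instance : Nonempty Slalom := ⟨⟨fun _ => ∅, fun n => by simp⟩⟩

/-- if `𝔟(R) < cov(I)` then `𝔟(R_I) = 𝔟(R)`. -/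
theorem stmt3 (I : Set (Set Baire)) (hI : IsIdeal I) :
    (bnum leStar < covNum I → bnum (RelMod leStar I) = bnum leStar) ∧
    (bnum neStar < covNum I → bnum (RelMod neStar I) = bnum neStar) ∧
    (bnum inStar < covNum I → bnum (RelMod inStar I) = bnum inStar) := by
  obtain ⟨⟨E, hE⟩, hdown, -⟩ := id hI
  refine ⟨key leStar (fun y => ⟨fun n => y n + 1, ?_⟩) I hI,
          key neStar (fun y => ⟨y, ?_⟩) I hI,
          key inStar (fun s => ⟨fun n => (s.1 n).sup id + 1, ?_⟩) I hI⟩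
  · intro hc
    obtain ⟨N, hN⟩ := Filter.eventually_atTop.mp hc
    have h' : y N + 1 ≤ y N := hN N le_rfl
    omega
  · intro hc
    obtain ⟨N, hN⟩ := Filter.eventually_atTop.mp hc
    exact absurd (hN N le_rfl) (by simp)
  · intro hc
    obtain ⟨N, hN⟩ := Filter.eventually_atTop.mp hc
    have h1 : (s.1 N).sup id + 1 ≤ (s.1 N).sup id := Finset.le_sup (f := id) (hN N le_rfl)
    omega
end

section
/- Let I be a σ-ideal on ω^ω. If cov(I) = ℵ₁, then 𝔟(∈*_I) ≥ ℵ₂. -/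
open Cardinal

noncomputable section StmtFourAux

/-- A trivial slalom. -/
def trivSlalom : Slalom := ⟨fun _ => ∅, by simp⟩

instance inst_s4 : Nonempty Slalom := ⟨trivSlalom⟩

/-- The empty set belongs to any ideal. -/
lemma empty_mem_of_isIdeal {I : Set (Set Baire)} (hI : IsIdeal I) : (∅ : Set Baire) ∈ I := by
  obtain ⟨S, hS⟩ := hI.1
  exact hI.2.1 S ∅ hS (Set.empty_subset _)

/-- Countable (set-indexed) unions of ideal sets are in a σ-ideal. -/
lemma countable_biUnion_mem {I : Set (Set Baire)} (hI : IsSigmaIdeal I)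
    {ι : Type} {S : Set ι} (hS : S.Countable) {X : ι → Set Baire}
    (hX : ∀ i ∈ S, X i ∈ I) : (⋃ i ∈ S, X i) ∈ I := by
  rcases S.eq_empty_or_nonempty with rfl | hne
  · simpa using empty_mem_of_isIdeal hI.1
  · obtain ⟨v, rfl⟩ := Set.Countable.exists_eq_range hS hne
    rw [Set.biUnion_range]
    exact hI.2 _ fun n => hX _ ⟨n, rfl⟩

theorem stmt4' (I : Set (Set Baire)) (hI : IsSigmaIdeal I)
    (hcov : covNum I = aleph 1) : aleph 2 ≤ bnum (RelMod inStar I) := by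
  have huniv : (Set.univ : Set Baire) ∉ I := by
    intro hu
    have h1 : covNum I ≤ #({Set.univ} : Set (Set Baire)) :=
      csInf_le (OrderBot.bddBelow _) ⟨{Set.univ}, by simpa using hu, rfl, by simp⟩
    rw [hcov, Cardinal.mk_singleton] at h1
    exact absurd (h1.trans_lt Cardinal.one_lt_aleph0) (not_lt.2 (Cardinal.aleph0_le_aleph 1))
  -- an unbounded family exists: all functions
  have hne : { c | ∃ A : Set (Baire → Baire), #A = c ∧
      ∀ y : Baire → Slalom, ∃ x ∈ A, ¬ RelMod inStar I x y }.Nonempty := by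
    refine ⟨_, Set.univ, rfl, fun g => ?_⟩
    refine ⟨fun x n => ((g x).1 n).sup id + 1, trivial, ?_⟩
    have : {x : Baire | ¬ inStar ((fun x n => ((g x).1 n).sup id + 1) x) (g x)} = Set.univ := by
      ext x
      simp only [Set.mem_setOf_eq, Set.mem_univ, iff_true]
      intro hin
      obtain ⟨n, hn⟩ := hin.exists
      have := Finset.le_sup (f := id) hn
      simp only [id] at this
      omega
    unfold RelMod
    rw [this]; exact huniv
  refine le_csInf hne ?_
  rintro c ⟨A, rfl, hA⟩
  by_contra hlt
  push_neg at hlt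
  have hcA : #A ≤ aleph 1 := by
    have h2 : (2 : Ordinal) = Order.succ 1 := by norm_num
    rw [h2, Cardinal.aleph_succ, Order.lt_succ_iff] at hlt
    exact hlt
  -- A is nonempty (else the trivial slalom function bounds it vacuously... it can't be unbounded)
  rcases A.eq_empty_or_nonempty with rfl | hAne
  · obtain ⟨x, hx, -⟩ := hA (fun _ => trivSlalom); exact hx
  -- index type of size ℵ₁
  set W := (aleph 1).ord.ToType with hW
  have hmkW : #W = aleph 1 := by rw [hW, Cardinal.mk_toType, Cardinal.card_ord]
  -- a cover of size ℵ₁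
  have hcovne : { c | ∃ J : Set (Set Baire), J ⊆ I ∧ #J = c ∧ ⋃₀ J = Set.univ }.Nonempty := by
    by_contra h
    rw [Set.not_nonempty_iff_eq_empty] at h
    rw [covNum, h, Cardinal.sInf_empty] at hcov
    exact (Cardinal.aleph0_le_aleph 1).not_gt (hcov ▸ Cardinal.aleph0_pos)
  have hmem := csInf_mem hcovne
  rw [show sInf { c | ∃ J : Set (Set Baire), J ⊆ I ∧ #J = c ∧ ⋃₀ J = Set.univ } = covNum I
    from rfl, hcov] at hmem
  obtain ⟨J, hJI, hJcard, hJcov⟩ := hmem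
  have : Nonempty (W ≃ J) := Cardinal.eq.mp (by rw [hmkW, hJcard])
  obtain ⟨eqv⟩ := this
  set X : W → Set Baire := fun w => (eqv w : Set Baire) with hX
  have hXI : ∀ w, X w ∈ I := fun w => hJI (eqv w).2
  -- selection of a cover element for each x
  have hsel : ∀ x : Baire, ∃ w : W, x ∈ X w := by
    intro x
    have : x ∈ ⋃₀ J := hJcov ▸ Set.mem_univ x
    obtain ⟨S, hS, hxS⟩ := this
    exact ⟨eqv.symm ⟨S, hS⟩, by simpa [hX] using hxS⟩
  choose asel hasel using hsel
  -- surjection from W onto A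
  have : Nonempty A := hAne.to_subtype
  obtain ⟨ι⟩ := Cardinal.le_def _ _ |>.mp (hcA.trans_eq hmkW.symm)
  set e : W → A := Function.invFun ι with he
  have hesurj : Function.Surjective e := Function.invFun_surjective ι.injective
  -- countable enumeration of Iic (asel x)
  have hcnt : ∀ x : Baire, ∃ u : ℕ → W, Set.Iic (asel x) = Set.range u := by
    intro x
    have h1 : (Set.Iio (asel x)).Countable :=
      (Cardinal.countable_iff_lt_aleph_one _).mpr (Cardinal.mk_Iio_ord_toType (asel x))
    have h2 : (Set.Iic (asel x)).Countable := by
      rw [← Set.Iio_union_right]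
      exact h1.union (Set.countable_singleton _)
    exact Set.Countable.exists_eq_range h2 ⟨asel x, Set.self_mem_Iic⟩
  choose u hu using hcnt
  -- the bounding slalom-valued function
  set g : Baire → Slalom := fun x =>
    ⟨fun n => (Finset.range n).image (fun k => (e (u x k) : Baire → Baire) x n),
      fun n => (Finset.card_image_le).trans (by simp)⟩ with hg
  -- g bounds everything in A: contradiction
  obtain ⟨f, hfA, hnR⟩ := hA g
  apply hnR
  obtain ⟨w, hw⟩ := hesurj ⟨f, hfA⟩
  have hsub : {x : Baire | ¬ inStar (f x) (g x)} ⊆ ⋃ v ∈ Set.Iio w, X v := by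
    intro x hx
    simp only [Set.mem_setOf_eq] at hx
    by_contra hxU
    have hwle : w ≤ asel x := by
      by_contra hlt'
      exact hxU (Set.mem_biUnion (Set.mem_Iio.2 (lt_of_not_ge hlt')) (hasel x))
    have : w ∈ Set.range (u x) := (hu x) ▸ Set.mem_Iic.2 hwle
    obtain ⟨k, hk⟩ := this
    apply hx
    filter_upwards [Filter.eventually_gt_atTop k] with n hn
    simp only [hg, Finset.mem_image]
    exact ⟨k, Finset.mem_range.2 hn, by rw [hk, hw]⟩
  have hIioC : (Set.Iio w).Countable :=
    (Cardinal.countable_iff_lt_aleph_one _).mpr (Cardinal.mk_Iio_ord_toType w)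
  exact hI.1.2.1 _ _ (countable_biUnion_mem hI hIioC (fun v _ => hXI v)) hsub

end StmtFourAux

/-- if `I` is a σ-ideal with `cov(I) = ℵ₁` then `𝔟(∈*_I) ≥ ℵ₂`. -/
theorem stmt4 (I : Set (Set Baire)) (hI : IsSigmaIdeal I)
    (hcov : covNum I = aleph 1) : aleph 2 ≤ bnum (RelMod inStar I) := by
  exact stmt4' I hI hcov
end

section
/- Let I be an ideal on ω^ω such that I has a cofinal subfamily of cardinality at most 𝔠 and such that for every X ∈ I the complement ω^ω \ X has cardinality 𝔠. Then for every base relation R ∈ {≤*, ≠*, ∈*}, 𝔡(R_I) = 𝔡(R_{{∅}}), where {∅} is the trivial ideal consisting only of the empty set. -/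
open Cardinal

/-- Greedy transversal: given at most continuum many sets, each of size at least continuum,
one can pick injectively one element from each. -/
lemma exists_injective_transversal {ι α : Type} (C : ι → Set α)
    (hι : #ι ≤ continuum) (hC : ∀ i, continuum ≤ #(C i)) :
    ∃ h : ι → α, Function.Injective h ∧ ∀ i, h i ∈ C i := by
  rcases isEmpty_or_nonempty ι with hE | hNE
  · exact ⟨fun i => isEmptyElim i, fun i => isEmptyElim i, fun i => isEmptyElim i⟩
  set T := (continuum.{0}).ord.ToType with hT
  have hmkT : #T = continuum := Cardinal.mk_ord_toType _
  obtain ⟨e⟩ : Nonempty (ι ↪ T) := by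
    rw [← Cardinal.le_def, hmkT]; exact hι
  have hinv : Function.LeftInverse (Function.invFun e) e :=
    Function.leftInverse_invFun e.injective
  set f : T → ι := Function.invFun e with hf
  have wf : WellFounded ((· < ·) : T → T → Prop) := IsWellFounded.wf
  -- key nonemptiness
  have key : ∀ (ξ : T) (ih : ∀ ζ, ζ < ξ → α),
      (C (f ξ) \ {x | ∃ ζ, ∃ hh : ζ < ξ, ih ζ hh = x}).Nonempty := by
    intro ξ ih
    rw [Set.nonempty_iff_ne_empty]
    intro hcon
    have hsub : C (f ξ) ⊆ {x | ∃ ζ, ∃ hh : ζ < ξ, ih ζ hh = x} := by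
      intro x hx
      by_contra hx'
      exact (Set.eq_empty_iff_forall_notMem.1 hcon x) ⟨hx, hx'⟩
    have h1 : continuum ≤ #({x | ∃ ζ, ∃ hh : ζ < ξ, ih ζ hh = x} : Set α) :=
      le_trans (hC _) (Cardinal.mk_le_mk_of_subset hsub)
    have h2 : #({x | ∃ ζ, ∃ hh : ζ < ξ, ih ζ hh = x} : Set α)
        ≤ #(Set.Iio ξ) := by
      apply Cardinal.mk_le_of_surjective
        (f := fun p : Set.Iio ξ => (⟨ih p.1 p.2, ⟨p.1, p.2, rfl⟩⟩ : _))
      rintro ⟨x, ζ, hh, rfl⟩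
      exact ⟨⟨ζ, hh⟩, rfl⟩
    have h3 : #(Set.Iio ξ) < continuum := Cardinal.mk_Iio_ord_toType ξ
    exact absurd ((h1.trans h2).trans_lt h3) (lt_irrefl _)
  set F : ∀ ξ : T, (∀ ζ, ζ < ξ → α) → α :=
    fun ξ ih => (key ξ ih).some with hF
  set h' : T → α := wf.fix F with hh'
  have hfix : ∀ ξ, h' ξ = F ξ (fun ζ _ => h' ζ) := fun ξ => wf.fix_eq F ξ
  have hspec : ∀ ξ, h' ξ ∈ C (f ξ) \ {x | ∃ ζ, ∃ hh : ζ < ξ, h' ζ = x} := by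
    intro ξ
    rw [hfix ξ]
    exact (key ξ (fun ζ _ => h' ζ)).some_mem
  have h'inj : Function.Injective h' := by
    intro ζ ξ hne
    by_contra hc
    rcases lt_or_gt_of_ne hc with hlt | hlt
    · exact (hspec ξ).2 ⟨ζ, hlt, hne⟩
    · exact (hspec ζ).2 ⟨ξ, hlt, hne.symm⟩
  refine ⟨fun i => h' (e i), fun i j hij => e.injective (h'inj hij), fun i => ?_⟩
  have := (hspec (e i)).1
  simpa [hinv i] using this

lemma dnum_relMod_eq {Y : Type} (R : Baire → Y → Prop)
    (hrefl : ∀ z : Baire, ∃ y : Y, R z y)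
    (hunb : ∀ y : Y, ∃ z : Baire, ¬ R z y)
    (I : Set (Set Baire)) (hI : IsIdeal I) (hcof : HasCofinalBase I)
    (hcompl : ∀ X ∈ I, #(↥(Xᶜ)) = continuum) :
    dnum (RelMod R I) = dnum (RelMod R ({∅} : Set (Set Baire))) := by
  classical
  obtain ⟨J, hJI, hJcard, hJcof⟩ := hcof
  have hempty : (∅ : Set Baire) ∈ I := by
    obtain ⟨A, hA⟩ := hI.1
    exact hI.2.1 A ∅ hA (Set.empty_subset A)
  set S0 : Set Cardinal :=
    { c | ∃ D : Set (Baire → Y), #D = c ∧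
      ∀ f : Baire → Baire, ∃ g ∈ D, RelMod R ({∅} : Set (Set Baire)) f g } with hS0
  set SI : Set Cardinal :=
    { c | ∃ D : Set (Baire → Y), #D = c ∧
      ∀ f : Baire → Baire, ∃ g ∈ D, RelMod R I f g } with hSI
  have hsub : S0 ⊆ SI := by
    rintro c ⟨D, hDc, hdom⟩
    refine ⟨D, hDc, fun f => ?_⟩
    obtain ⟨g, hgD, hg⟩ := hdom f
    refine ⟨g, hgD, ?_⟩
    have : {x : Baire | ¬ R (f x) (g x)} = ∅ := hg
    rw [RelMod, this]
    exact hempty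
  have hS0ne : S0.Nonempty := by
    refine ⟨#(Set.univ : Set (Baire → Y)), Set.univ, rfl, fun f => ?_⟩
    refine ⟨fun x => (hrefl (f x)).choose, Set.mem_univ _, ?_⟩
    have : {x : Baire | ¬ R (f x) ((hrefl (f x)).choose)} = ∅ := by
      rw [Set.eq_empty_iff_forall_notMem]
      exact fun x hx => hx (hrefl (f x)).choose_spec
    rw [RelMod, this]
    rfl
  have hSIne : SI.Nonempty := hS0ne.mono hsub
  -- every member of SI is at least continuum
  have hlow : ∀ c ∈ SI, continuum ≤ c := by
    rintro c ⟨D, hDc, hdom⟩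
    by_contra hlt
    push_neg at hlt
    have hDcard : #(↥D) < continuum := by rw [hDc]; exact hlt
    have hιcard : #(↥J × ↥D) ≤ continuum := by
      rw [Cardinal.mk_prod, Cardinal.lift_id, Cardinal.lift_id]
      calc #(↥J) * #(↥D) ≤ continuum * continuum :=
            mul_le_mul' hJcard hDcard.le
        _ = continuum := Cardinal.continuum_mul_self
    obtain ⟨h, hinj, hmem⟩ := exists_injective_transversal
      (fun p : ↥J × ↥D => ((p.1 : Set Baire)ᶜ : Set Baire)) hιcard
      (fun p => (hcompl p.1.1 (hJI p.1.2)).ge)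
    set f : Baire → Baire := fun x =>
      if hx : ∃ p : ↥J × ↥D, h p = x then
        (hunb ((hx.choose.2 : ↥D).1 x)).choose else x with hfdef
    obtain ⟨g, hgD, hg⟩ := hdom f
    obtain ⟨B, hBJ, hFB⟩ := hJcof _ hg
    set p : ↥J × ↥D := (⟨B, hBJ⟩, ⟨g, hgD⟩) with hp
    have hx : ∃ q : ↥J × ↥D, h q = h p := ⟨p, rfl⟩
    have hchoose : hx.choose = p := hinj hx.choose_spec
    have hfval : f (h p) = (hunb (g (h p))).choose := by
      rw [hfdef]
      simp only [dif_pos hx]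
      congr 1
      rw [hchoose]
    have hfail : h p ∈ {x : Baire | ¬ R (f x) (g x)} := by
      rw [Set.mem_setOf_eq, hfval]
      exact (hunb (g (h p))).choose_spec
    have : h p ∈ B := hFB hfail
    exact hmem p this
  -- upper bound: dnum for {∅} is at most dnum for I
  have hle1 : dnum (RelMod R I) ≤ dnum (RelMod R ({∅} : Set (Set Baire))) :=
    csInf_le_csInf (OrderBot.bddBelow _) hS0ne hsub
  have hle2 : dnum (RelMod R ({∅} : Set (Set Baire))) ≤ dnum (RelMod R I) := by
    have hcmem : sInf SI ∈ SI := csInf_mem hSIne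
    obtain ⟨D, hDc, hdom⟩ := hcmem
    set c := sInf SI with hc
    have hcge : continuum ≤ c := hlow c (hDc ▸ ⟨D, rfl, hdom⟩)
    have hιcard : #(↥J × Baire) ≤ continuum := by
      rw [Cardinal.mk_prod, Cardinal.lift_id, Cardinal.lift_id, mk_baire]
      calc #(↥J) * continuum ≤ continuum * continuum :=
            mul_le_mul' hJcard le_rfl
        _ = continuum := Cardinal.continuum_mul_self
    obtain ⟨h, hinj, hmem⟩ := exists_injective_transversal
      (fun p : ↥J × Baire => ((p.1 : Set Baire)ᶜ : Set Baire)) hιcard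
      (fun p => (hcompl p.1.1 (hJI p.1.2)).ge)
    set s : Baire → Baire := fun x =>
      if hx : ∃ p : ↥J × Baire, h p = x then hx.choose.2 else x with hsdef
    have hsval : ∀ (B : ↥J) (y : Baire), s (h (B, y)) = y := by
      intro B y
      have hx : ∃ p : ↥J × Baire, h p = h (B, y) := ⟨(B, y), rfl⟩
      have hchoose : hx.choose = (B, y) := hinj hx.choose_spec
      rw [hsdef]
      simp only [dif_pos hx, hchoose]
    set D' : Set (Baire → Y) :=
      Set.range (fun q : ↥D × ↥J => fun y => (q.1 : Baire → Y) (h (q.2, y))) with hD'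
    have hD'card : #(↥D') ≤ c := by
      calc #(↥D') ≤ #(↥D × ↥J) := Cardinal.mk_range_le
        _ = #(↥D) * #(↥J) := by rw [Cardinal.mk_prod, Cardinal.lift_id, Cardinal.lift_id]
        _ ≤ c * continuum := mul_le_mul' (le_of_eq hDc) hJcard
        _ ≤ c * c := mul_le_mul' le_rfl hcge
        _ = c := Cardinal.mul_eq_self (Cardinal.aleph0_le_continuum.trans hcge)
    have hD'dom : ∀ f : Baire → Baire, ∃ g' ∈ D',
        RelMod R ({∅} : Set (Set Baire)) f g' := by
      intro f
      obtain ⟨g, hgD, hg⟩ := hdom (fun x => f (s x))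
      obtain ⟨B, hBJ, hFB⟩ := hJcof _ hg
      refine ⟨fun y => g (h (⟨B, hBJ⟩, y)), ⟨(⟨g, hgD⟩, ⟨B, hBJ⟩), rfl⟩, ?_⟩
      have : {x : Baire | ¬ R (f x) (g (h (⟨B, hBJ⟩, x)))} = ∅ := by
        rw [Set.eq_empty_iff_forall_notMem]
        intro y hy
        have hnB : h (⟨B, hBJ⟩, y) ∉ B := hmem (⟨B, hBJ⟩, y)
        have hnF : h (⟨B, hBJ⟩, y) ∉ {x : Baire | ¬ R (f (s x)) (g x)} :=
          fun hmem' => hnB (hFB hmem')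
        rw [Set.mem_setOf_eq, not_not] at hnF
        rw [hsval ⟨B, hBJ⟩ y] at hnF
        exact hy hnF
      rw [RelMod, this]
      rfl
    calc dnum (RelMod R ({∅} : Set (Set Baire))) ≤ #(↥D') :=
          csInf_le (OrderBot.bddBelow _) ⟨D', rfl, hD'dom⟩
      _ ≤ c := hD'card
  exact le_antisymm hle1 hle2

lemma leStar_refl' (z : Baire) : ∃ y : Baire, leStar z y :=
  ⟨z, Filter.Eventually.of_forall fun _ => le_rfl⟩

lemma leStar_unb (y : Baire) : ∃ z : Baire, ¬ leStar z y := by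
  refine ⟨fun n => y n + 1, fun h => ?_⟩
  obtain ⟨n, hn⟩ := h.exists
  have h2 : y n + 1 ≤ y n := hn
  omega

lemma neStar_refl' (z : Baire) : ∃ y : Baire, neStar z y :=
  ⟨fun n => z n + 1, Filter.Eventually.of_forall fun n => by
    show z n ≠ z n + 1; omega⟩

lemma neStar_unb (y : Baire) : ∃ z : Baire, ¬ neStar z y := by
  refine ⟨y, fun h => ?_⟩
  obtain ⟨n, hn⟩ := h.exists
  exact hn rfl

lemma inStar_refl' (z : Baire) : ∃ s : Slalom, inStar z s := by
  classical
  refine ⟨⟨fun n => if n = 0 then ∅ else {z n}, fun n => ?_⟩, ?_⟩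
  · cases n with
    | zero => simp
    | succ m => simp
  · rw [inStar, Filter.eventually_atTop]
    exact ⟨1, fun n hn => by simp [Nat.one_le_iff_ne_zero.1 hn]⟩

lemma inStar_unb (s : Slalom) : ∃ z : Baire, ¬ inStar z s := by
  refine ⟨fun n => (s.1 n).sup id + 1, fun h => ?_⟩
  obtain ⟨n, hn⟩ := h.exists
  have h2 : (s.1 n).sup id + 1 ∈ s.1 n := hn
  have h3 := Finset.le_sup (f := id) h2
  simp only [id_eq] at h3
  omega

/-- if `I` has a cofinal subfamily of cardinality `≤ 𝔠` and every member of `I`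
has complement of cardinality `𝔠`, then `𝔡(R_I) = 𝔡(R_{{∅}})`. -/
theorem stmt6 (I : Set (Set Baire)) (hI : IsIdeal I) (hcof : HasCofinalBase I)
    (hcompl : ∀ X ∈ I, #(↥(Xᶜ)) = continuum) :
    (dnum (RelMod leStar I) = dnum (RelMod leStar ({∅} : Set (Set Baire)))) ∧
    (dnum (RelMod neStar I) = dnum (RelMod neStar ({∅} : Set (Set Baire)))) ∧
    (dnum (RelMod inStar I) = dnum (RelMod inStar ({∅} : Set (Set Baire)))) := by
  refine ⟨?_, ?_, ?_⟩
  · exact dnum_relMod_eq leStar leStar_refl' leStar_unb I hI hcof hcompl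
  · exact dnum_relMod_eq neStar neStar_refl' neStar_unb I hI hcof hcompl
  · exact dnum_relMod_eq inStar inStar_refl' inStar_unb I hI hcof hcompl
end

section
/- Let R be one of the three base relations ≤*, ≠*, ∈* and let I be an ideal on ω^ω with a cofinal subfamily of cardinality at most 𝔠 and such that every member of I has complement of cardinality 𝔠 (in particular I may be the trivial ideal {∅}). Then 𝔡(R_I) > 2^{ℵ₀}. -/
open Cardinal

section AuxForStmt7

open Cardinal Ordinal in
/-- A system of distinct representatives for continuum-sized sets indexed by `𝔠.ord`. -/
lemma exists_sdr_stmt7 (S : (Cardinal.continuum.{0}.ord).ToType → Set Baire)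
    (hS : ∀ α, Cardinal.continuum ≤ #(S α)) :
    ∃ φ : (Cardinal.continuum.{0}.ord).ToType → Baire,
      (∀ α, φ α ∈ S α) ∧ Function.Injective φ := by
  classical
  have wf : WellFounded ((· < ·) : (Cardinal.continuum.{0}.ord).ToType →
      (Cardinal.continuum.{0}.ord).ToType → Prop) := IsWellFounded.wf
  have key : ∀ (α : (Cardinal.continuum.{0}.ord).ToType) (ih : ∀ β, β < α → Baire),
      (S α \ Set.range (fun β : Set.Iio α => ih β β.2)).Nonempty := by
    intro α ih
    rw [Set.diff_nonempty]
    intro hsub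
    have h1 : #(S α) ≤ #(Set.range fun β : Set.Iio α => ih β β.2) :=
      Cardinal.mk_le_mk_of_subset hsub
    have h2 : #(Set.range fun β : Set.Iio α => ih β β.2) < Cardinal.continuum :=
      lt_of_le_of_lt Cardinal.mk_range_le (Cardinal.mk_Iio_ord_toType α)
    exact absurd (hS α) (not_le.2 (lt_of_le_of_lt h1 h2))
  let F : ∀ α : (Cardinal.continuum.{0}.ord).ToType, (∀ β, β < α → Baire) → Baire :=
    fun α ih => (key α ih).some
  let φ : (Cardinal.continuum.{0}.ord).ToType → Baire := wf.fix F
  have hfix : ∀ α, φ α = F α (fun β _ => φ β) := fun α => wf.fix_eq F α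
  have hmem : ∀ α, φ α ∈ S α \ Set.range (fun β : Set.Iio α => φ β) := by
    intro α
    rw [hfix α]
    exact (key α (fun β _ => φ β)).some_mem
  refine ⟨φ, fun α => (hmem α).1, ?_⟩
  intro a b hab
  by_contra hne
  rcases lt_or_gt_of_ne hne with h | h
  · exact (hmem b).2 ⟨⟨a, h⟩, hab⟩
  · exact (hmem a).2 ⟨⟨b, h⟩, hab.symm⟩

lemma mk_baire_stmt7 : #Baire = Cardinal.continuum := by
  rw [show #Baire = #(ℕ → ℕ) from rfl, Cardinal.mk_arrow]
  simp [Cardinal.aleph0_power_aleph0]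

lemma key_lemma_stmt7 {Y : Type} (R : Baire → Y → Prop)
    (hbad : ∀ y : Y, ∃ z : Baire, ¬ R z y)
    (hdom : ∀ z : Baire, ∃ y : Y, R z y)
    (I : Set (Set Baire)) (hI : IsIdeal I) (hcof : HasCofinalBase I)
    (hcompl : ∀ X ∈ I, #(↥(Xᶜ)) = continuum) :
    (2 : Cardinal) ^ aleph0 < dnum (RelMod R I) := by
  classical
  obtain ⟨J, hJI, hJc, hJcof⟩ := hcof
  have hempty : (∅ : Set Baire) ∈ I := by
    obtain ⟨A, hA⟩ := hI.1
    exact hI.2.1 A ∅ hA (Set.empty_subset A)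
  have hSne : {c | ∃ D : Set (Baire → Y), #D = c ∧
      ∀ f, ∃ g ∈ D, RelMod R I f g}.Nonempty := by
    refine ⟨#(Set.univ : Set (Baire → Y)), Set.univ, rfl, fun f => ?_⟩
    refine ⟨fun x => (hdom (f x)).choose, Set.mem_univ _, ?_⟩
    show {x : Baire | ¬ R (f x) ((hdom (f x)).choose)} ∈ I
    have : {x : Baire | ¬ R (f x) ((hdom (f x)).choose)} = ∅ := by
      ext x; simp [(hdom (f x)).choose_spec]
    rw [this]; exact hempty
  rw [Cardinal.two_power_aleph0, dnum]
  by_contra hle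
  push_neg at hle
  obtain ⟨D, hDc, hDdom⟩ := csInf_mem hSne
  have hDle : #D ≤ Cardinal.continuum := hDc ▸ hle
  have hP : #(↥D × ↥J) ≤ Cardinal.continuum := by
    rw [Cardinal.mk_prod, Cardinal.lift_id, Cardinal.lift_id]
    calc #↥D * #↥J ≤ Cardinal.continuum * Cardinal.continuum :=
          mul_le_mul' hDle hJc
      _ = Cardinal.continuum := Cardinal.continuum_mul_self
  have hO : #((Cardinal.continuum.{0}.ord).ToType) = Cardinal.continuum := by
    rw [Cardinal.mk_toType, Cardinal.card_ord]
  obtain ⟨ψ⟩ : Nonempty ((↥D × ↥J) ↪ (Cardinal.continuum.{0}.ord).ToType) := by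
    rw [← Cardinal.le_def, hO]; exact hP
  set O := (Cardinal.continuum.{0}.ord).ToType
  let S : O → Set Baire := fun α =>
    if h : ∃ p : ↥D × ↥J, ψ p = α then ((h.choose.2 : ↥J) : Set Baire)ᶜ else Set.univ
  have hS : ∀ α, Cardinal.continuum ≤ #(S α) := by
    intro α
    by_cases h : ∃ p : ↥D × ↥J, ψ p = α
    · rw [show S α = ((h.choose.2 : ↥J) : Set Baire)ᶜ from dif_pos h]
      exact (hcompl _ (hJI h.choose.2.2)).ge
    · rw [show S α = Set.univ from dif_neg h, Cardinal.mk_univ, mk_baire_stmt7]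
  obtain ⟨φ, hφmem, hφinj⟩ := exists_sdr_stmt7 S hS
  let f : Baire → Baire := fun x =>
    if h : ∃ p : ↥D × ↥J, φ (ψ p) = x then (hbad ((h.choose.1 : Baire → Y) x)).choose
    else fun _ => 0
  obtain ⟨g, hgD, hRel⟩ := hDdom f
  obtain ⟨Y0, hY0J, hKY0⟩ := hJcof _ hRel
  set p : ↥D × ↥J := (⟨g, hgD⟩, ⟨Y0, hY0J⟩) with hp
  set x0 : Baire := φ (ψ p) with hx0
  have hx0Y0 : x0 ∉ Y0 := by
    have h1 := hφmem (ψ p)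
    have h : ∃ q : ↥D × ↥J, ψ q = ψ p := ⟨p, rfl⟩
    rw [show S (ψ p) = ((h.choose.2 : ↥J) : Set Baire)ᶜ from dif_pos h] at h1
    have : h.choose = p := ψ.injective h.choose_spec
    rw [this] at h1
    exact h1
  have hfx0 : ¬ R (f x0) (g x0) := by
    have h : ∃ q : ↥D × ↥J, φ (ψ q) = x0 := ⟨p, rfl⟩
    have hcq : h.choose = p := ψ.injective (hφinj h.choose_spec)
    have : f x0 = (hbad ((h.choose.1 : Baire → Y) x0)).choose := dif_pos h
    rw [this, hcq]
    exact (hbad (g x0)).choose_spec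
  exact hx0Y0 (hKY0 hfx0)

end AuxForStmt7

/-- if `I` has a cofinal subfamily of cardinality `≤ 𝔠` and every member of `I`
has complement of cardinality `𝔠`, then `𝔡(R_I) > 2^ℵ₀`. -/
theorem stmt7 (I : Set (Set Baire)) (hI : IsIdeal I) (hcof : HasCofinalBase I)
    (hcompl : ∀ X ∈ I, #(↥(Xᶜ)) = continuum) :
    ((2 : Cardinal) ^ aleph0 < dnum (RelMod leStar I)) ∧
    ((2 : Cardinal) ^ aleph0 < dnum (RelMod neStar I)) ∧
    ((2 : Cardinal) ^ aleph0 < dnum (RelMod inStar I)) := by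
  refine ⟨?_, ?_, ?_⟩
  · refine key_lemma_stmt7 leStar ?_ ?_ I hI hcof hcompl
    · intro y
      refine ⟨fun n => y n + 1, fun h => ?_⟩
      obtain ⟨n, hn⟩ := h.exists
      simp at hn
    · intro z
      exact ⟨z, Filter.Eventually.of_forall fun n => le_rfl⟩
  · refine key_lemma_stmt7 neStar ?_ ?_ I hI hcof hcompl
    · intro y
      refine ⟨y, fun h => ?_⟩
      obtain ⟨n, hn⟩ := h.exists
      exact hn rfl
    · intro z
      refine ⟨fun n => z n + 1, Filter.Eventually.of_forall fun n => ?_⟩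
      simp
  · refine key_lemma_stmt7 inStar ?_ ?_ I hI hcof hcompl
    · intro y
      refine ⟨fun n => (y.1 n).sup id + 1, fun h => ?_⟩
      obtain ⟨n, hn⟩ := h.exists
      have h2 : (y.1 n).sup id + 1 ≤ (y.1 n).sup id := Finset.le_sup (f := id) hn
      omega
    · intro z
      refine ⟨⟨fun n => if n = 0 then ∅ else {z n}, fun n => ?_⟩, ?_⟩
      · show (if n = 0 then (∅ : Finset ℕ) else {z n}).card ≤ n
        rcases Nat.eq_zero_or_pos n with h | h
        · subst h; simp
        · rw [if_neg (by omega), Finset.card_singleton]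
          exact h
      · unfold inStar
        filter_upwards [Filter.eventually_ge_atTop 1] with n hn
        show z n ∈ if n = 0 then (∅ : Finset ℕ) else {z n}
        rw [if_neg (by omega)]
        exact Finset.mem_singleton_self _
end

section
/- Let R be one of the three base relations ≤*, ≠*, ∈* and let κ be an infinite cardinal with κ ≤ 𝔠. If there is an eventually R-dominating sequence of length κ, then 𝔡(R_{{∅}}) ≤ 𝔡^𝔠_κ. -/
open Cardinal

/-- `𝔡^λ_κ`: the dominating number of the relation on `κ^λ` given by
`f ≤* g` iff `|{α < λ : f α > g α}| < κ`. -/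
noncomputable def dLamKappa (lam κ : Cardinal) : Cardinal :=
  dnum (fun f g : lam.ord.ToType → κ.ord.ToType => #{a | ¬ f a ≤ g a} < κ)

/-- An eventually `R`-dominating sequence of length `κ`. -/
def EvDomSeq {Y : Type} (R : Baire → Y → Prop) (κ : Cardinal) : Prop :=
  ∃ x : κ.ord.ToType → Y, ∀ y : Baire, ∃ α₀ : κ.ord.ToType, ∀ α, α₀ ≤ α → R y (x α)

lemma stmt8_aux {Y : Type} (R : Baire → Y → Prop) (κ : Cardinal)
    (hκ : aleph0 ≤ κ) (hκc : κ ≤ continuum) (hev : EvDomSeq R κ) :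
    dnum (RelMod R ({∅} : Set (Set Baire))) ≤ dLamKappa continuum κ := by
  classical
  set κT := κ.ord.ToType with hκT
  set lamT := continuum.ord.ToType with hlamT
  have hκ0 : κ ≠ 0 := fun h => by simp [h] at hκ; exact (Cardinal.aleph0_ne_zero hκ)
  haveI : Nonempty κT := Ordinal.toType_nonempty_iff_ne_zero.2 (by
    simpa using hκ0)
  haveI : NoMaxOrder κT := Cardinal.noMaxOrder hκ
  have hmkκT : #κT = κ := Cardinal.mk_ord_toType κ
  have hmklamT : #lamT = continuum := Cardinal.mk_ord_toType continuum
  obtain ⟨xs, hxs⟩ := hev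
  choose A hA using hxs
  -- an equivalence Baire × κT ≃ lamT
  have hcard : #(Baire × κT) = #lamT := by
    rw [Cardinal.mk_prod, Cardinal.lift_id, Cardinal.lift_id, mk_baire, hmkκT, hmklamT,
      Cardinal.mul_eq_left (Cardinal.aleph0_le_continuum) hκc hκ0]
  obtain ⟨e⟩ := Cardinal.eq.1 hcard
  -- the dominating set for dLamKappa
  set S : Set Cardinal :=
    { c | ∃ D : Set (lamT → κT), #D = c ∧ ∀ f : lamT → κT, ∃ g ∈ D, #{a | ¬ f a ≤ g a} < κ }
    with hS
  have hSne : S.Nonempty := by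
    refine ⟨#(Set.univ : Set (lamT → κT)), Set.univ, rfl, fun f => ⟨f, Set.mem_univ _, ?_⟩⟩
    have : {a : lamT | ¬ f a ≤ f a} = ∅ := by
      ext a; simp
    rw [this]
    simpa using hκ0.bot_lt
  have hmem : dLamKappa continuum κ ∈ S := by
    rw [dLamKappa, dnum]
    exact csInf_mem hSne
  obtain ⟨D, hDcard, hDdom⟩ := hmem
  -- κ ≤ #D
  have hκD : κ ≤ #D := by
    by_contra hlt
    push_neg at hlt
    have hle : #(↥D × κT) ≤ #lamT := by
      rw [Cardinal.mk_prod, Cardinal.lift_id, Cardinal.lift_id, hmkκT, hmklamT]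
      calc #↥D * κ ≤ κ * κ := by
            exact mul_le_mul' hlt.le le_rfl
        _ = κ := Cardinal.mul_eq_self hκ
        _ ≤ continuum := hκc
    obtain ⟨j⟩ := Cardinal.le_def _ _ |>.1 hle
    -- diagonalize
    set big : κT → κT := fun a => (exists_gt a).choose with hbigdef
    have hbig : ∀ a : κT, a < big a := fun a => (exists_gt a).choose_spec
    set f : lamT → κT := fun β =>
      if hb : ∃ p : ↥D × κT, j p = β then
        big ((hb.choose.1 : lamT → κT) β)
      else Classical.arbitrary κT with hf
    obtain ⟨g, hgD, hg⟩ := hDdom f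
    have hbad : ∀ δ : κT, ¬ f (j (⟨g, hgD⟩, δ)) ≤ g (j (⟨g, hgD⟩, δ)) := by
      intro δ
      set β := j (⟨g, hgD⟩, δ) with hβ
      have hb : ∃ p : ↥D × κT, j p = β := ⟨(⟨g, hgD⟩, δ), rfl⟩
      have hch : hb.choose = (⟨g, hgD⟩, δ) := j.injective hb.choose_spec
      have hfβ : f β = big ((hb.choose.1 : lamT → κT) β) := dif_pos hb
      rw [hch] at hfβ
      exact not_le.2 (by rw [hfβ]; exact hbig _)
    have hinj : Function.Injective
        (fun δ : κT => (⟨j (⟨g, hgD⟩, δ), hbad δ⟩ : {a | ¬ f a ≤ g a})) := by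
      intro δ₁ δ₂ h12
      have := j.injective (Subtype.ext_iff.1 h12)
      exact (Prod.ext_iff.1 this).2
    have : κ ≤ #{a | ¬ f a ≤ g a} :=
      le_of_eq_of_le hmkκT.symm (Cardinal.mk_le_of_injective hinj)
    exact absurd hg (not_lt.2 this)
  -- build the dominating family for dnum
  set G : ↥D × κT → (Baire → Y) := fun p x => xs (p.1.1 (e (x, p.2))) with hG
  set D' : Set (Baire → Y) := Set.range G with hD'
  have hdom' : ∀ f : Baire → Baire, ∃ g ∈ D', RelMod R ({∅} : Set (Set Baire)) f g := by
    intro f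
    set F : lamT → κT := Function.extend (fun p : Baire × κT => e p)
      (fun p => A (f p.1)) (fun _ => Classical.arbitrary κT) with hF
    obtain ⟨h, hhD, hB⟩ := hDdom F
    set B : Set lamT := {a | ¬ F a ≤ h a} with hBdef
    set K : Set κT := {δ | ∃ x : Baire, e (x, δ) ∈ B} with hK
    have hKB : #K ≤ #B := by
      have hinj : Function.Injective (fun δ : ↥K =>
          (⟨e (δ.2.choose, δ.1), δ.2.choose_spec⟩ : ↥B)) := by
        intro δ₁ δ₂ h12
        have := e.injective (Subtype.ext_iff.1 h12)
        exact Subtype.ext (Prod.ext_iff.1 this).2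
      exact Cardinal.mk_le_of_injective hinj
    have hKlt : #K < κ := lt_of_le_of_lt hKB hB
    have : ∃ δ : κT, δ ∉ K := by
      by_contra hc
      push_neg at hc
      have : K = Set.univ := Set.eq_univ_of_forall hc
      rw [this, show #(Set.univ : Set κT) = #κT from Cardinal.mk_univ, hmkκT] at hKlt
      exact lt_irrefl κ hKlt
    obtain ⟨δ, hδ⟩ := this
    refine ⟨G (⟨h, hhD⟩, δ), ⟨(⟨h, hhD⟩, δ), rfl⟩, ?_⟩
    rw [RelMod, Set.mem_singleton_iff]
    rw [Set.eq_empty_iff_forall_notMem]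
    intro x hx
    have hnB : e (x, δ) ∉ B := fun hmem => hδ ⟨x, hmem⟩
    have h1 : F (e (x, δ)) ≤ h (e (x, δ)) := not_not.1 hnB
    have h2 : F (e (x, δ)) = A (f x) := by
      rw [hF]
      exact Function.Injective.extend_apply (fun a b hab => e.injective hab) _ _ (x, δ)
    exact hx (hA (f x) _ (h2 ▸ h1))
  have h1 : dnum (RelMod R ({∅} : Set (Set Baire))) ≤ #D' :=
    csInf_le' ⟨D', rfl, hdom'⟩
  have h2 : #D' ≤ #D * κ := by
    calc #D' ≤ #(↥D × κT) := Cardinal.mk_range_le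
      _ = #↥D * κ := by rw [Cardinal.mk_prod, Cardinal.lift_id, Cardinal.lift_id, hmkκT]
  have h3 : #D * κ = #D :=
    Cardinal.mul_eq_left (hκ.trans hκD) hκD hκ0
  calc dnum (RelMod R ({∅} : Set (Set Baire))) ≤ #D' := h1
    _ ≤ #D * κ := h2
    _ = #D := h3
    _ = dLamKappa continuum κ := hDcard

/-- if `ℵ₀ ≤ κ ≤ 𝔠` and there is an eventually `R`-dominating sequence of
length `κ`, then `𝔡(R_{{∅}}) ≤ 𝔡^𝔠_κ`. -/
theorem stmt8 (κ : Cardinal) (hκ : aleph0 ≤ κ) (hκc : κ ≤ continuum) :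
    (EvDomSeq leStar κ →
      dnum (RelMod leStar ({∅} : Set (Set Baire))) ≤ dLamKappa continuum κ) ∧
    (EvDomSeq neStar κ →
      dnum (RelMod neStar ({∅} : Set (Set Baire))) ≤ dLamKappa continuum κ) ∧
    (EvDomSeq inStar κ →
      dnum (RelMod inStar ({∅} : Set (Set Baire))) ≤ dLamKappa continuum κ) :=
  ⟨stmt8_aux leStar κ hκ hκc, stmt8_aux neStar κ hκ hκc, stmt8_aux inStar κ hκ hκc⟩
end

section
/- Let R be one of the three base relations ≤*, ≠*, ∈* and let κ be an infinite cardinal with κ ≤ 𝔠. If there is an eventually R-unbounded sequence of length κ, then 𝔡(R_{{∅}}) ≥ 𝔡^𝔠_κ. -/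
open Cardinal

/-- An eventually `R`-unbounded sequence of length `κ`. -/
def EvUnbSeq {Y : Type} (R : Baire → Y → Prop) (κ : Cardinal) : Prop :=
  ∃ x : κ.ord.ToType → Baire, ∀ y : Y, ∃ α₀ : κ.ord.ToType, ∀ α, α₀ ≤ α → ¬ R (x α) y

lemma key_aux {Y : Type} (R : Baire → Y → Prop) (κ : Cardinal) (hκ : aleph0 ≤ κ)
    (htot : ∀ x : Baire, ∃ y : Y, R x y) (hseq : EvUnbSeq R κ) :
    dLamKappa continuum κ ≤ dnum (RelMod R ({∅} : Set (Set Baire))) := by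
  obtain ⟨x, hx⟩ := hseq
  -- a bijection between `continuum.ord.ToType` and Baire space
  have hmk : #(continuum.ord.ToType) = #Baire := by
    rw [Cardinal.mk_ord_toType]
    rw [show #Baire = continuum by
      rw [show (Baire : Type) = (ℕ → ℕ) from rfl, ← Cardinal.power_def, Cardinal.mk_nat,
        Cardinal.power_self_eq le_rfl, Cardinal.continuum]]
  obtain ⟨e⟩ := Cardinal.eq.mp hmk
  -- the dnum set is nonempty
  have hne : { c | ∃ D : Set (Baire → Y), #D = c ∧
      ∀ f : Baire → Baire, ∃ g ∈ D, RelMod R ({∅} : Set (Set Baire)) f g }.Nonempty := by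
    refine ⟨#(Set.univ : Set (Baire → Y)), Set.univ, rfl, fun f => ?_⟩
    refine ⟨fun z => (htot (f z)).choose, Set.mem_univ _, ?_⟩
    have : {z : Baire | ¬ R (f z) ((htot (f z)).choose)} = ∅ := by
      ext z; simp [(htot (f z)).choose_spec]
    simp [RelMod, this]
  have hmem := csInf_mem hne
  obtain ⟨D, hD, hdom⟩ := hmem
  -- the transformed family
  set G : (Baire → Y) → (continuum.ord.ToType → κ.ord.ToType) :=
    fun g β => (hx (g (e β))).choose with hG
  refine le_trans (csInf_le' (⟨G '' D, rfl, fun f => ?_⟩ :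
    #(G '' D) ∈ { c | ∃ D' : Set (continuum.ord.ToType → κ.ord.ToType), #D' = c ∧
      ∀ f : continuum.ord.ToType → κ.ord.ToType, ∃ g ∈ D', #{a | ¬ f a ≤ g a} < κ })) ?_
  · -- G '' D dominates
    obtain ⟨g, hgD, hg⟩ := hdom (fun z => x (f (e.symm z)))
    refine ⟨G g, Set.mem_image_of_mem _ hgD, ?_⟩
    have hRempty : {z : Baire | ¬ R (x (f (e.symm z))) (g z)} = ∅ := by
      simpa [RelMod] using hg
    have hall : ∀ β, f β < G g β := by
      intro β
      have h1 : R (x (f β)) (g (e β)) := by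
        by_contra hcon
        have : (e β) ∈ {z : Baire | ¬ R (x (f (e.symm z))) (g z)} := by
          simpa using hcon
        simp [hRempty] at this
      by_contra hle
      exact (hx (g (e β))).choose_spec (f β) (le_of_not_gt hle) h1
    have : {a | ¬ f a ≤ G g a} = ∅ := by
      ext a; simp [(hall a).le]
    rw [this]
    simpa using hκ.trans_lt' aleph0_pos
  · rw [dnum, ← hD]
    exact Cardinal.mk_image_le

/-- if `ℵ₀ ≤ κ ≤ 𝔠` and there is an eventually `R`-unbounded sequence of
length `κ`, then `𝔡(R_{{∅}}) ≥ 𝔡^𝔠_κ`. -/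
theorem stmt9 (κ : Cardinal) (hκ : aleph0 ≤ κ) (hκc : κ ≤ continuum) :
    (EvUnbSeq leStar κ →
      dLamKappa continuum κ ≤ dnum (RelMod leStar ({∅} : Set (Set Baire)))) ∧
    (EvUnbSeq neStar κ →
      dLamKappa continuum κ ≤ dnum (RelMod neStar ({∅} : Set (Set Baire)))) ∧
    (EvUnbSeq inStar κ →
      dLamKappa continuum κ ≤ dnum (RelMod inStar ({∅} : Set (Set Baire)))) := by
  refine ⟨key_aux _ κ hκ (fun x => ⟨x, Filter.Eventually.of_forall fun n => le_rfl⟩),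
    key_aux _ κ hκ (fun x => ⟨fun n => x n + 1,
      Filter.Eventually.of_forall fun n => (Nat.succ_ne_self (x n)).symm⟩),
    key_aux _ κ hκ (fun x => ?_)⟩
  refine ⟨⟨fun n => if n = 0 then ∅ else {x n}, fun n => ?_⟩, ?_⟩
  · rcases n with _ | n <;> simp
  · rw [inStar, Filter.eventually_atTop]
    exact ⟨1, fun n hn => by simp [Nat.ne_zero_of_lt hn]⟩
end

section
/- In ZFC, 𝔡^𝔠_𝔟 ≤ 𝔡(≤*_{{∅}}): the dominating number of functions from 𝔠 to 𝔟 (with domination modulo sets of size < 𝔟) is at most the dominating number of the everywhere eventual-domination relation on functions from ω^ω to ω^ω. -/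
open Cardinal

/- ## Auxiliary lemmas -/

lemma leStar_refl (x : Baire) : leStar x x :=
  Filter.Eventually.of_forall fun _ => le_rfl

lemma leStar_trans {x y z : Baire} (h1 : leStar x y) (h2 : leStar y z) : leStar x z :=
  (h1.and h2).mono fun _ hn => hn.1.trans hn.2

lemma not_leStar_succ (y : Baire) : ¬ leStar (fun n => y n + 1) y := by
  intro h
  obtain ⟨n, hn⟩ := h.exists
  simp only at hn
  omega

/-- The set of cardinalities of `≤*`-unbounded families. -/
def BSet : Set Cardinal :=
  { c | ∃ A : Set Baire, #A = c ∧ ∀ y : Baire, ∃ x ∈ A, ¬ leStar x y }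

lemma BSet_nonempty : BSet.Nonempty :=
  ⟨#(Set.univ : Set Baire), Set.univ, rfl,
    fun y => ⟨fun n => y n + 1, Set.mem_univ _, not_leStar_succ y⟩⟩

lemma bnum_mem : bnum leStar ∈ BSet := csInf_mem BSet_nonempty

lemma finite_bounded {A : Set Baire} (hA : A.Finite) : ∃ u, ∀ x ∈ A, leStar x u := by
  refine Set.Finite.induction_on (motive := fun A _ => ∃ u, ∀ x ∈ A, leStar x u) A hA
    ⟨id, fun x hx => absurd hx (Set.notMem_empty x)⟩ ?_
  rintro a A - - ⟨u, hu⟩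
  refine ⟨fun n => max (a n) (u n), fun x hx => ?_⟩
  rcases hx with rfl | hx
  · exact Filter.Eventually.of_forall fun n => le_max_left _ _
  · exact (hu x hx).mono fun n h => h.trans (le_max_right _ _)

lemma aleph0_le_bnum : ℵ₀ ≤ bnum leStar := by
  refine le_csInf BSet_nonempty fun c hc => ?_
  obtain ⟨A, hAc, hA⟩ := hc
  by_contra h
  push_neg at h
  have hfin : A.Finite := by
    rw [← Cardinal.lt_aleph0_iff_set_finite, hAc]
    exact h
  obtain ⟨u, hu⟩ := finite_bounded hfin
  obtain ⟨x, hxA, hx⟩ := hA u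
  exact hx (hu x hxA)

lemma bounded_of_lt {S : Set Baire} (h : #S < bnum leStar) :
    ∃ u, ∀ x ∈ S, leStar x u := by
  by_contra hc
  push_neg at hc
  exact absurd (csInf_le' (show #S ∈ BSet from ⟨S, rfl, hc⟩)) (not_le.2 h)

/-- There is a `≤*`-increasing unbounded sequence of length `𝔟`. -/
lemma exists_scale : ∃ bs : (bnum leStar).ord.ToType → Baire,
    (∀ η ξ, η ≤ ξ → leStar (bs η) (bs ξ)) ∧ ∀ y : Baire, ∃ ξ, ¬ leStar (bs ξ) y := by
  classical
  set b := bnum leStar with hbdef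
  set T := b.ord.ToType with hTdef
  obtain ⟨A, hAcard, hAunb⟩ := bnum_mem
  have hT : #T = #A := by rw [hTdef, Cardinal.mk_toType, card_ord, hAcard]
  obtain ⟨e⟩ := Cardinal.eq.1 hT
  set a : T → Baire := fun ξ => (e ξ : Baire) with hadef
  have ha : ∀ y, ∃ ξ, ¬ leStar (a ξ) y := by
    intro y
    obtain ⟨x, hxA, hx⟩ := hAunb y
    refine ⟨e.symm ⟨x, hxA⟩, ?_⟩
    simpa [hadef] using hx
  have key : ∀ (ξ : T) (rec : ∀ η : T, η < ξ → Baire),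
      ∃ u, ∀ x ∈ (Set.range (fun p : {η : T // η < ξ} => rec p.1 p.2) ∪ {a ξ}),
        leStar x u := by
    intro ξ rec
    apply bounded_of_lt
    have h1 : #(Set.range fun p : {η : T // η < ξ} => rec p.1 p.2) < b :=
      lt_of_le_of_lt Cardinal.mk_range_le (Cardinal.mk_Iio_ord_toType ξ)
    have h2 : #({a ξ} : Set Baire) < b := by
      rw [Cardinal.mk_singleton]
      exact lt_of_lt_of_le Cardinal.one_lt_aleph0 aleph0_le_bnum
    exact lt_of_le_of_lt (Cardinal.mk_union_le _ _)
      (Cardinal.add_lt_of_lt aleph0_le_bnum h1 h2)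
  let H : ∀ ξ : T, (∀ η : T, η < ξ → Baire) → Baire := fun ξ rec => (key ξ rec).choose
  have wf : WellFounded ((· < ·) : T → T → Prop) := IsWellFounded.wf
  let bs : T → Baire := fun ξ => wf.fix H ξ
  have hbs : ∀ ξ, bs ξ = H ξ (fun η _ => bs η) := fun ξ => wf.fix_eq H ξ
  have hdom : ∀ ξ, ∀ x ∈ (Set.range (fun p : {η : T // η < ξ} => bs p.1) ∪ {a ξ}),
      leStar x (bs ξ) := by
    intro ξ
    rw [hbs ξ]
    exact (key ξ (fun η _ => bs η)).choose_spec
  have habs : ∀ ξ, leStar (a ξ) (bs ξ) := fun ξ =>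
    hdom ξ (a ξ) (Set.mem_union_right _ (Set.mem_singleton _))
  have hmono : ∀ η ξ : T, η ≤ ξ → leStar (bs η) (bs ξ) := by
    intro η ξ h
    rcases eq_or_lt_of_le h with rfl | h
    · exact leStar_refl _
    · exact hdom ξ (bs η) (Set.mem_union_left _ ⟨⟨η, h⟩, rfl⟩)
  refine ⟨bs, hmono, fun y => ?_⟩
  obtain ⟨ξ, hξ⟩ := ha y
  exact ⟨ξ, fun h => hξ (leStar_trans (habs ξ) h)⟩

/-- `𝔡^𝔠_𝔟 ≤ 𝔡(≤*_{{∅}})`. -/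
theorem stmt16 :
    dLamKappa continuum (bnum leStar) ≤ dnum (RelMod leStar ({∅} : Set (Set Baire))) := by
  classical
  obtain ⟨bs, hmono, hunb⟩ := exists_scale
  have hI : #(continuum.ord.ToType) = #Baire := by
    rw [Cardinal.mk_toType, card_ord]
    rw [show #Baire = #ℕ ^ #ℕ from (Cardinal.power_def ℕ ℕ).symm]
    rw [Cardinal.mk_nat, Cardinal.aleph0_power_aleph0]
  obtain ⟨e⟩ := Cardinal.eq.1 hI
  have gkey : ∀ (g : Baire → Baire) (i : continuum.ord.ToType),
      ∃ β : (bnum leStar).ord.ToType, ∀ ξ, leStar (bs ξ) (g (e i)) → ξ < β := by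
    intro g i
    by_contra h
    push_neg at h
    obtain ⟨ξ₀, hξ₀⟩ := hunb (g (e i))
    obtain ⟨ξ, hξ1, hξ2⟩ := h ξ₀
    exact hξ₀ (leStar_trans (hmono ξ₀ ξ hξ2) hξ1)
  let gstar : (Baire → Baire) → (continuum.ord.ToType → (bnum leStar).ord.ToType) :=
    fun g i => (gkey g i).choose
  have gstar_spec : ∀ g i ξ, leStar (bs ξ) (g (e i)) → ξ < gstar g i :=
    fun g i => (gkey g i).choose_spec
  have DSet_ne : {c | ∃ D : Set (Baire → Baire), #D = c ∧
      ∀ f : Baire → Baire, ∃ g ∈ D, RelMod leStar ({∅} : Set (Set Baire)) f g}.Nonempty := by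
    refine ⟨_, Set.univ, rfl, fun f => ⟨f, Set.mem_univ _, ?_⟩⟩
    rw [RelMod, Set.mem_singleton_iff, Set.eq_empty_iff_forall_notMem]
    intro x hx
    exact hx (leStar_refl _)
  have hmem : dnum (RelMod leStar ({∅} : Set (Set Baire))) ∈
      {c | ∃ D : Set (Baire → Baire), #D = c ∧
        ∀ f : Baire → Baire, ∃ g ∈ D, RelMod leStar ({∅} : Set (Set Baire)) f g} :=
    csInf_mem DSet_ne
  obtain ⟨D, hDcard, hDdom⟩ := hmem
  have hdom2 : ∀ f : continuum.ord.ToType → (bnum leStar).ord.ToType,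
      ∃ g' ∈ (gstar '' D), #{i | ¬ f i ≤ g' i} < bnum leStar := by
    intro f
    obtain ⟨g, hgD, hg⟩ := hDdom (fun x => bs (f (e.symm x)))
    refine ⟨gstar g, ⟨g, hgD, rfl⟩, ?_⟩
    rw [RelMod, Set.mem_singleton_iff, Set.eq_empty_iff_forall_notMem] at hg
    have hg' : ∀ x, leStar (bs (f (e.symm x))) (g x) := fun x => not_not.1 (hg x)
    have hempty : {i | ¬ f i ≤ gstar g i} = ∅ := by
      rw [Set.eq_empty_iff_forall_notMem]
      intro i hi
      exact hi (le_of_lt (gstar_spec g i (f i) (by simpa using hg' (e i))))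
    rw [hempty, Cardinal.mk_emptyCollection]
    exact lt_of_lt_of_le Cardinal.aleph0_pos aleph0_le_bnum
  calc dLamKappa continuum (bnum leStar) ≤ #(gstar '' D) :=
      csInf_le' ⟨gstar '' D, rfl, hdom2⟩
    _ ≤ #D := Cardinal.mk_image_le
    _ = dnum (RelMod leStar ({∅} : Set (Set Baire))) := hDcard
end
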